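/- arXiv:2004.10062 — 2 statements merged into one kernel-verified Lean document; each statement's English description precedes it below -/
import Mathlib

section
/- Let L > 0, g ∈ C¹((-π/2, π/2)) be odd with g'(θ) > 0 for all θ and g(θ) → +∞ as θ → π/2. Let χ : (-π/2, π/2) × [0, R₀) → ℝ be continuous, continuously differentiable in a neighborhood of (0,0), with χ(0, 𝓡) = 0 for all 𝓡, χ(θ, 0) = g(θ) for all θ, ∂_θχ(0,0) = g'(0) > 0, and suppose there is a constant C̄ > 0 with |χ(θ, 𝓡) - g(θ)| ≤ C̄ for all (θ, 𝓡). Then there exists 𝓡₁ > 0 such that for all 𝓡 < 𝓡₁, χ(θ, 𝓡) = 0 if and only if θ = 0. -/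
/-!
Since `g` is odd and increasing, `|g θ| → ∞` as `|θ| → π/2`, so the uniform bound
`|χ - g| ≤ Cbar` excludes zeros of `χ(·, 𝓡)` with `|θ| ≥ b` for some fixed `b < π/2`.
Near `(0, 0)` the implicit function theorem, applied with `∂θχ(0, 0) = g'(0) ≠ 0`, shows that
the zero set of `χ` is a graph over `𝓡`; since it contains the line `θ = 0`, it is that line.
On the remaining compact set of angles `χ(·, 0) = g` does not vanish, and by continuity neither
does `χ(·, 𝓡)` for small `𝓡`.
-/

open Set Real Filter Topology

theorem HasStrictFDerivAt.exists_mem_nhds_subsingleton_levelSet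
    {𝕜 : Type*} [NontriviallyNormedField 𝕜]
    {E₁ : Type*} [NormedAddCommGroup E₁] [NormedSpace 𝕜 E₁] [CompleteSpace E₁]
    {E₂ : Type*} [NormedAddCommGroup E₂] [NormedSpace 𝕜 E₂] [CompleteSpace E₂]
    {F : Type*} [NormedAddCommGroup F] [NormedSpace 𝕜 F] [CompleteSpace F]
    {f : E₁ × E₂ → F} {f' : E₁ × E₂ →L[𝕜] F} {u : E₁ × E₂} (hf : HasStrictFDerivAt f f' u)
    (hf' : (f' ∘L .inr 𝕜 E₁ E₂).IsInvertible) :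
    ∃ U ∈ 𝓝 u.2, ∀ᶠ x in 𝓝 u.1, {y ∈ U | f (x, y) = f u}.Subsingleton := by
  set ψ := hf.implicitFunctionOfProdDomain hf'
  have h : ∀ᶠ v in 𝓝 u.1 ×ˢ 𝓝 u.2, f v = f u ↔ ψ v.1 = v.2 := by
    rw [← nhds_prod_eq]
    exact hf.eventually_apply_eq_iff_implicitFunctionOfProdDomain hf'
  obtain ⟨p, hp, q, hq, hpq⟩ := eventually_prod_iff.1 h
  refine ⟨{y | q y}, hq, hp.mono fun x hx y hy y' hy' => ?_⟩
  exact ((hpq hx hy.1).1 hy.2).symm.trans ((hpq hx hy'.1).1 hy'.2)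

theorem ContinuousLinearMap.isInvertible_of_apply_one_ne_zero {𝕜 : Type*}
    [NontriviallyNormedField 𝕜] {L : 𝕜 →L[𝕜] 𝕜} (hL : L 1 ≠ 0) : L.IsInvertible := by
  refine ⟨ContinuousLinearEquiv.unitsEquivAut 𝕜 (Units.mk0 _ hL), ext_ring ?_⟩
  simp

theorem IsCompact.eventually_forall_mem_of_continuousOn {X Y Z : Type*} [TopologicalSpace X]
    [TopologicalSpace Y] [TopologicalSpace Z] {f : X × Y → Z} {s : Set X} {t : Set Y}
    {K : Set X} {y₀ : Y} {V : Set Z} (hK : IsCompact K) (hKs : K ⊆ s)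
    (hf : ContinuousOn f (s ×ˢ t)) (hy₀ : y₀ ∈ t) (hV : IsOpen V)
    (hKV : ∀ x ∈ K, f (x, y₀) ∈ V) : ∀ᶠ y in 𝓝[t] y₀, ∀ x ∈ K, f (x, y) ∈ V := by
  have h : ∀ᶠ y in 𝓝 y₀, ∀ x ∈ K, x ∈ s → y ∈ t → f (x, y) ∈ V := by
    refine hK.eventually_forall_of_forall_eventually fun x hx => ?_
    have hx' := (hf (x, y₀) ⟨hKs hx, hy₀⟩).preimage_mem_nhdsWithin (hV.mem_nhds (hKV x hx))
    rw [mem_nhdsWithin_iff_eventually] at hx'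
    exact (continuous_swap.tendsto (y₀, x)).eventually hx' |>.mono
      fun z hz hzs hzt => hz ⟨hzs, hzt⟩
  filter_upwards [nhdsWithin_le_nhds h, self_mem_nhdsWithin] with y hy hyt x hx
  exact hy x hx (hKs hx) hyt

theorem strictMonoOn_of_hasDerivAt_pos {s : Set ℝ} (hs : Convex ℝ s) {f f' : ℝ → ℝ}
    (hf : ∀ x ∈ s, HasDerivAt f (f' x) x) (hf' : ∀ x ∈ s, 0 < f' x) : StrictMonoOn f s :=
  strictMonoOn_of_hasDerivWithinAt_pos hs (fun x hx => (hf x hx).continuousAt.continuousWithinAt)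
    (fun x hx => (hf x (interior_subset hx)).hasDerivWithinAt)
    (fun x hx => hf' x (interior_subset hx))

theorem apply_zero_eq_zero_of_odd {s : Set ℝ} {g : ℝ → ℝ} (hodd : ∀ x ∈ s, g (-x) = -g x)
    (h0 : (0 : ℝ) ∈ s) : g 0 = 0 := by
  linarith [neg_zero (G := ℝ) ▸ hodd 0 h0]

theorem apply_ne_zero_of_odd {s : Set ℝ} {g : ℝ → ℝ} (hodd : ∀ x ∈ s, g (-x) = -g x)
    (hg : StrictMonoOn g s) (h0 : (0 : ℝ) ∈ s) {x : ℝ} (hx : x ∈ s) (hx0 : x ≠ 0) :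
    g x ≠ 0 := fun hgx =>
  hx0 (hg.injOn hx h0 (hgx.trans (apply_zero_eq_zero_of_odd hodd h0).symm))

theorem abs_apply_eq_apply_abs_of_odd {a : ℝ} {g : ℝ → ℝ}
    (hodd : ∀ x ∈ Ioo (-a) a, g (-x) = -g x) (hg : MonotoneOn g (Ioo (-a) a)) {x : ℝ}
    (hx : x ∈ Ioo (-a) a) : |g x| = g |x| := by
  have h0 : (0 : ℝ) ∈ Ioo (-a) a := ⟨by linarith [hx.1, hx.2], by linarith [hx.1, hx.2]⟩
  have hg0 := apply_zero_eq_zero_of_odd hodd h0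
  rcases le_or_gt 0 x with hx0 | hx0
  · rw [abs_of_nonneg hx0, abs_of_nonneg (hg0 ▸ hg h0 hx hx0)]
  · rw [abs_of_neg hx0, abs_of_nonpos (hg0 ▸ hg hx h0 hx0.le), hodd x hx]

theorem exists_forall_lt_abs_apply_of_odd {a : ℝ} {g : ℝ → ℝ} (ha : 0 < a)
    (hodd : ∀ x ∈ Ioo (-a) a, g (-x) = -g x) (hg : MonotoneOn g (Ioo (-a) a))
    (hg_top : Tendsto g (𝓝[<] a) atTop) (C : ℝ) :
    ∃ b < a, ∀ x ∈ Ioo (-a) a, b ≤ |x| → C < |g x| := by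
  obtain ⟨b, hCb, hb⟩ :=
    ((hg_top.eventually_gt_atTop C).and (Ioo_mem_nhdsLT (neg_lt_self ha))).exists
  refine ⟨b, hb.2, fun x hx hbx => ?_⟩
  have habs : |x| ∈ Ioo (-a) a := ⟨by linarith [abs_nonneg x, hx.1], abs_lt.2 hx⟩
  rw [abs_apply_eq_apply_abs_of_odd hodd hg hx]
  exact hCb.trans_le (hg hb habs hbx)

theorem exists_mem_nhds_subsingleton_levelSet_of_contDiffAt {χ : ℝ → ℝ → ℝ} {x₀ y₀ c : ℝ}
    (hχ : ContDiffAt ℝ 1 (fun p : ℝ × ℝ => χ p.1 p.2) (x₀, y₀))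
    (hc : HasDerivAt (χ · y₀) c x₀) (hc0 : c ≠ 0) :
    ∃ U ∈ 𝓝 x₀, ∀ᶠ y in 𝓝 y₀, {x ∈ U | χ x y = χ x₀ y₀}.Subsingleton := by
  -- Mathlib's implicit function theorem solves for the second coordinate.
  set F : ℝ × ℝ → ℝ := fun p => χ p.2 p.1
  have hF : ContDiffAt ℝ 1 F (y₀, x₀) :=
    hχ.comp (y₀, x₀) (contDiff_snd.prodMk contDiff_fst).contDiffAt
  have hF' := hF.hasStrictFDerivAt one_ne_zero
  have hpartial : (fderiv ℝ F (y₀, x₀) ∘L .inr ℝ ℝ ℝ) 1 = c := by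
    have hline : HasDerivAt (fun x : ℝ => (y₀, x)) ((0 : ℝ), (1 : ℝ)) x₀ :=
      (hasDerivAt_const x₀ y₀).prodMk (hasDerivAt_id x₀)
    exact (hF'.hasFDerivAt.comp_hasDerivAt x₀ hline).unique hc
  exact hF'.exists_mem_nhds_subsingleton_levelSet
    (ContinuousLinearMap.isInvertible_of_apply_one_ne_zero (hpartial ▸ hc0))

theorem stmt6_general (R₀ : ℝ) (hR₀ : 0 < R₀) (g g' : ℝ → ℝ) (χ : ℝ → ℝ → ℝ) (Cbar : ℝ)
    (hg_diff : ∀ θ ∈ Ioo (-(π / 2)) (π / 2), HasDerivAt g (g' θ) θ)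
    (hg_odd : ∀ θ ∈ Ioo (-(π / 2)) (π / 2), g (-θ) = -g θ)
    (hg' : ∀ θ ∈ Ioo (-(π / 2)) (π / 2), 0 < g' θ)
    (hg_blow : Tendsto g (nhdsWithin (π / 2) (Iio (π / 2))) atTop)
    (hχ_cont : ContinuousOn (fun p : ℝ × ℝ => χ p.1 p.2)
      (Ioo (-(π / 2)) (π / 2) ×ˢ Ico 0 R₀))
    (hχ_C1 : ContDiffAt ℝ 1 (fun p : ℝ × ℝ => χ p.1 p.2) (0, 0))
    (hχ0 : ∀ 𝓡 ∈ Ico (0 : ℝ) R₀, χ 0 𝓡 = 0)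
    (hχg : ∀ θ ∈ Ioo (-(π / 2)) (π / 2), χ θ 0 = g θ)
    (hbound : ∀ θ ∈ Ioo (-(π / 2)) (π / 2), ∀ 𝓡 ∈ Ico (0 : ℝ) R₀,
      |χ θ 𝓡 - g θ| ≤ Cbar) :
    ∃ 𝓡₁ > 0, ∀ 𝓡, 0 ≤ 𝓡 → 𝓡 < 𝓡₁ → 𝓡 < R₀ →
      ∀ θ ∈ Ioo (-(π / 2)) (π / 2), (χ θ 𝓡 = 0 ↔ θ = 0) := by
  set I := Ioo (-(π / 2)) (π / 2)
  have h0 : (0 : ℝ) ∈ I := ⟨by linarith [pi_pos], by positivity⟩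
  have hmono : StrictMonoOn g I := strictMonoOn_of_hasDerivAt_pos (convex_Ioo _ _) hg_diff hg'
  obtain ⟨b, hb, hfar⟩ :=
    exists_forall_lt_abs_apply_of_odd (by positivity) hg_odd hmono.monotoneOn hg_blow Cbar
  obtain ⟨U, hU, hnear⟩ := exists_mem_nhds_subsingleton_levelSet_of_contDiffAt hχ_C1
    ((hg_diff 0 h0).congr_of_eventuallyEq (eventually_of_mem (isOpen_Ioo.mem_nhds h0) hχg))
    (hg' 0 h0).ne'
  rw [hχ0 0 ⟨le_rfl, hR₀⟩] at hnear
  have hKI : Icc (-b) b \ interior U ⊆ I := fun θ hθ =>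
    ⟨by linarith [hθ.1.1], hθ.1.2.trans_lt hb⟩
  have hmid : ∀ᶠ r in 𝓝[≥] 0, ∀ θ ∈ Icc (-b) b \ interior U, χ θ r ∈ ({0}ᶜ : Set ℝ) := by
    rw [← nhdsWithin_Ico_eq_nhdsGE hR₀]
    refine (isCompact_Icc.diff isOpen_interior).eventually_forall_mem_of_continuousOn
      hKI hχ_cont ⟨le_rfl, hR₀⟩ isOpen_compl_singleton fun θ hθ => ?_
    rw [mem_compl_singleton_iff, hχg θ (hKI hθ)]
    exact apply_ne_zero_of_odd hg_odd hmono h0 (hKI hθ)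
      fun hθ0 => hθ.2 (hθ0 ▸ mem_interior_iff_mem_nhds.2 hU)
  have hzeros : ∀ᶠ r in 𝓝[≥] 0, r < R₀ → ∀ θ ∈ I, χ θ r = 0 → θ = 0 := by
    filter_upwards [nhdsWithin_le_nhds hnear, hmid, self_mem_nhdsWithin]
      with r hr_near hr_mid (hr0 : 0 ≤ r) hrR θ hθ hχθ
    have hr : r ∈ Ico 0 R₀ := ⟨hr0, hrR⟩
    by_cases hθU : θ ∈ interior U
    · exact hr_near ⟨interior_subset hθU, hχθ⟩ ⟨mem_of_mem_nhds hU, hχ0 r hr⟩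
    by_cases hθb : |θ| ≤ b
    · exact (hr_mid θ ⟨abs_le.1 hθb, hθU⟩ hχθ).elim
    · exact ((hfar θ hθ (not_le.1 hθb).le).not_ge (by simpa [hχθ] using hbound θ hθ r hr)).elim
  obtain ⟨ε, hε, hεzeros⟩ := mem_nhdsGE_iff_exists_Ico_subset.1 hzeros
  refine ⟨ε, hε, fun r hr0 hrε hrR θ hθ => ⟨hεzeros ⟨hr0, hrε⟩ hrR θ hθ, ?_⟩⟩
  rintro rfl
  exact hχ0 r ⟨hr0, hrR⟩

/-- abstract uniqueness for the rotating-obstacle equilibrium: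
with `g` odd, strictly increasing (derivative `g' > 0`), blowing up at `π/2`,
and `χ` a continuous perturbation of `g` which is `C¹` near `(0,0)`, vanishes
on `θ = 0`, equals `g` at `𝓡 = 0`, and stays uniformly `Cbar`-close to `g`,
there is `𝓡₁ > 0` such that for `𝓡 < 𝓡₁` the only zero of `χ(·,𝓡)` is `θ = 0`. -/
theorem stmt6 (R₀ : ℝ) (hR₀ : 0 < R₀) (g g' : ℝ → ℝ) (χ : ℝ → ℝ → ℝ) (Cbar : ℝ)
    (hCbar : 0 < Cbar)
    (hg_diff : ∀ θ ∈ Ioo (-(π / 2)) (π / 2), HasDerivAt g (g' θ) θ)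
    (hg_odd : ∀ θ ∈ Ioo (-(π / 2)) (π / 2), g (-θ) = -g θ)
    (hg' : ∀ θ ∈ Ioo (-(π / 2)) (π / 2), 0 < g' θ)
    (hg_blow : Tendsto g (nhdsWithin (π / 2) (Iio (π / 2))) atTop)
    (hχ_cont : ContinuousOn (fun p : ℝ × ℝ => χ p.1 p.2)
      (Ioo (-(π / 2)) (π / 2) ×ˢ Ico 0 R₀))
    (hχ_C1 : ContDiffAt ℝ 1 (fun p : ℝ × ℝ => χ p.1 p.2) (0, 0))
    (hχ0 : ∀ 𝓡 ∈ Ico (0 : ℝ) R₀, χ 0 𝓡 = 0)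
    (hχg : ∀ θ ∈ Ioo (-(π / 2)) (π / 2), χ θ 0 = g θ)
    (hχ_deriv : HasDerivAt (fun θ => χ θ 0) (g' 0) 0)
    (hbound : ∀ θ ∈ Ioo (-(π / 2)) (π / 2), ∀ 𝓡 ∈ Ico (0 : ℝ) R₀,
      |χ θ 𝓡 - g θ| ≤ Cbar) :
    ∃ 𝓡₁ > 0, ∀ 𝓡, 0 ≤ 𝓡 → 𝓡 < 𝓡₁ → 𝓡 < R₀ →
      ∀ θ ∈ Ioo (-(π / 2)) (π / 2), (χ θ 𝓡 = 0 ↔ θ = 0) :=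
  stmt6_general R₀ hR₀ g g' χ Cbar hg_diff hg_odd hg' hg_blow hχ_cont hχ_C1 hχ0 hχg hbound
end

section
/- Let L > 1 and f ∈ C¹((-L+1, L-1)) satisfy f'(h) > 0 for all h and |f(h)|·(L-1-|h|)^{3/2} → +∞ as |h| → L-1. Let ψ : (-L+1, L-1) × [0, R₀) → ℝ be continuous, continuously differentiable near (0,0), with ψ(0,𝓡) = 0 for all 𝓡, ψ(h,0) = f(h), and suppose there is C̄ > 0 such that |ψ(h,𝓡) - f(h)| ≤ C̄ (L-1-|h|)^{-3/2} for all (h,𝓡). Then there exists 𝓡₁ > 0 such that for all 0 < 𝓡 < 𝓡₁: ψ(h,𝓡) > 0 for h ∈ (0, L-1), ψ(h,𝓡) < 0 for h ∈ (-L+1, 0), and in particular ψ(h,𝓡) = 0 if and only if h = 0. -/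
/-!
Write `d(h) = L - 1 - |h|`. Since `f' > 0` and `f 0 = ψ 0 0 = 0`, `h f(h) > 0` for `h ≠ 0`, and
we show `h ψ(h, 𝓡) > 0` for `h ≠ 0` and small `𝓡 > 0` on three regions. Near `h = 0`, strict
differentiability at `(0, 0)` gives `ψ(h, 𝓡) - ψ(0, 𝓡) = f'(0) h + o(|h|)` uniformly in small `𝓡`,
and `ψ(0, 𝓡) = 0` then fixes the sign of `ψ` for `|h|, 𝓡 < δ`. Near the ends, `d(h) < η`, the
blowup `|f(h)| d(h)^{3/2} > C̄` beats the perturbation bound `C̄ d(h)^{-3/2}`, uniformly in `𝓡`.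
On the remaining compact set `δ ≤ |h| ≤ L - 1 - η`, `h ψ(h, 0) = h f(h) > 0` persists for
small `𝓡` by the tube lemma.
-/

open Set Real Filter

lemma mul_pos_of_abs_sub_lt_abs {a b : ℝ} (h : |b - a| < |a|) : 0 < a * b := by
  nlinarith [abs_nonneg (b - a), neg_abs_le (a * (b - a)), abs_mul a (b - a), sq_abs a]

lemma mul_pos_of_mul_pos_of_mul_pos {a b c : ℝ} (hab : 0 < a * b) (hbc : 0 < b * c) :
    0 < a * c := by
  have : 0 < b ^ 2 * (a * c) := by nlinarith [mul_pos hab hbc]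
  exact pos_of_mul_pos_right this (sq_nonneg b)

lemma StrictMonoOn.mul_map_pos {f : ℝ → ℝ} {s : Set ℝ} (hf : StrictMonoOn f s) (h0 : 0 ∈ s)
    (hf0 : f 0 = 0) {x : ℝ} (hx : x ∈ s) (hx0 : x ≠ 0) : 0 < x * f x := by
  rcases hx0.lt_or_gt with hneg | hpos
  · exact mul_pos_of_neg_of_neg hneg (hf0 ▸ hf hx h0 hneg)
  · exact mul_pos hpos (hf0 ▸ hf h0 hx hpos)

lemma mul_map_pos_of_hasDerivAt_pos {f f' : ℝ → ℝ} {a b : ℝ}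
    (hf : ∀ x ∈ Ioo a b, HasDerivAt f (f' x) x) (hf' : ∀ x ∈ Ioo a b, 0 < f' x)
    (h0 : (0 : ℝ) ∈ Ioo a b) (hf0 : f 0 = 0) {x : ℝ} (hx : x ∈ Ioo a b) (hx0 : x ≠ 0) :
    0 < x * f x := by
  refine StrictMonoOn.mul_map_pos ?_ h0 hf0 hx hx0
  exact strictMonoOn_of_hasDerivWithinAt_pos (convex_Ioo a b)
    (fun y hy ↦ (hf y hy).continuousAt.continuousWithinAt)
    (fun y hy ↦ (hf y (interior_subset hy)).hasDerivWithinAt)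
    (fun y hy ↦ hf' y (interior_subset hy))

lemma mul_pos_of_abs_sub_le_mul_rpow_neg {x y z C t p : ℝ} (ht : 0 < t) (hxy : 0 < x * y)
    (hy : C < |y| * t ^ p) (hz : |z - y| ≤ C * t ^ (-p)) : 0 < x * z := by
  refine mul_pos_of_mul_pos_of_mul_pos hxy (mul_pos_of_abs_sub_lt_abs (hz.trans_lt ?_))
  rwa [rpow_neg ht.le, ← div_eq_mul_inv, div_lt_iff₀ (rpow_pos_of_pos ht p)]

lemma HasFDerivAt.apply_one_zero {F : ℝ × ℝ → ℝ} {D : ℝ × ℝ →L[ℝ] ℝ} {x y a : ℝ}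
    (hF : HasFDerivAt F D (x, y)) (ha : HasDerivAt (fun h ↦ F (h, y)) a x) : D (1, 0) = a := by
  simpa using (hF.comp x (hasFDerivAt_prodMk_left x y)).hasDerivAt.unique ha

lemma HasStrictFDerivAt.exists_abs_sub_le {F : ℝ × ℝ → ℝ} {D : ℝ × ℝ →L[ℝ] ℝ}
    (hF : HasStrictFDerivAt F D (0, 0)) {ε : ℝ} (hε : 0 < ε) :
    ∃ δ > 0, ∀ h r, |h| < δ → |r| < δ → |F (h, r) - F (0, r) - D (1, 0) * h| ≤ ε * |h| := by
  obtain ⟨δ, hδ, hball⟩ := Metric.eventually_nhds_iff.1 (hF.isLittleO.def hε)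
  refine ⟨δ, hδ, fun h r hh hr ↦ ?_⟩
  have hdist : dist (((h, r), (0, r)) : (ℝ × ℝ) × ℝ × ℝ) ((0, 0), (0, 0)) < δ := by
    simp only [Prod.dist_eq, Real.dist_eq, sub_zero]
    exact max_lt (max_lt hh hr) (max_lt (by simpa) hr)
  have hD : D (h, 0) = D (1, 0) * h := by
    rw [show ((h, 0) : ℝ × ℝ) = h • (1, 0) by simp, map_smul, smul_eq_mul, mul_comm]
  simpa [hD, Prod.norm_def] using hball hdist

lemma exists_mul_pos_near_zero {ψ : ℝ → ℝ → ℝ} {a R₀ : ℝ}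
    (hψ : ContDiffAt ℝ 1 (fun p : ℝ × ℝ ↦ ψ p.1 p.2) (0, 0))
    (ha : HasDerivAt (fun h ↦ ψ h 0) a 0) (ha0 : 0 < a) (hψ0 : ∀ r ∈ Ico 0 R₀, ψ 0 r = 0) :
    ∃ δ > 0, ∀ r ∈ Ico 0 R₀, r < δ → ∀ h, |h| < δ → h ≠ 0 → 0 < h * ψ h r := by
  have hstrict := hψ.hasStrictFDerivAt one_ne_zero
  obtain ⟨δ, hδ, hest⟩ := hstrict.exists_abs_sub_le (half_pos ha0)
  rw [hstrict.hasFDerivAt.apply_one_zero ha] at hest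
  refine ⟨δ, hδ, fun r hr hrδ h hh hne ↦ ?_⟩
  have hψh := hest h r hh (by rwa [abs_of_nonneg hr.1])
  rw [hψ0 r hr, sub_zero] at hψh
  have : 0 < a * h * ψ h r := mul_pos_of_abs_sub_lt_abs <| by
    rw [abs_mul, abs_of_pos ha0]; nlinarith [abs_pos.2 hne]
  exact pos_of_mul_pos_right (by rwa [mul_assoc] at this) ha0.le

lemma IsCompact.exists_forall_pos_of_continuousOn {X : Type*} [TopologicalSpace X] {K : Set X}
    (hK : IsCompact K) {g : X × ℝ → ℝ} {R : ℝ} (hR : 0 < R)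
    (hg : ContinuousOn g (K ×ˢ Ico 0 R)) (h0 : ∀ x ∈ K, 0 < g (x, 0)) :
    ∃ r > 0, ∀ x ∈ K, ∀ s ∈ Ico 0 r, 0 < g (x, s) := by
  obtain ⟨V, hV, hVeq⟩ := continuousOn_iff'.1 hg (Ioi 0) isOpen_Ioi
  have hKV : K ×ˢ {0} ⊆ V := by
    rintro ⟨x, _⟩ ⟨hx, rfl⟩
    have hx0 : (x, (0 : ℝ)) ∈ V ∩ K ×ˢ Ico 0 R := hVeq ▸ ⟨h0 x hx, hx, left_mem_Ico.2 hR⟩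
    exact hx0.1
  obtain ⟨u, v, -, hv, hKu, h0v, huv⟩ := generalized_tube_lemma hK isCompact_singleton hV hKV
  obtain ⟨ε, hε, hball⟩ := Metric.isOpen_iff.1 hv 0 (h0v rfl)
  refine ⟨min ε R, lt_min hε hR, fun x hx s hs ↦ ?_⟩
  have hsR : s ∈ Ico 0 R := ⟨hs.1, hs.2.trans_le (min_le_right _ _)⟩
  have hsv : s ∈ v := hball (by
    rw [Metric.mem_ball, Real.dist_eq, sub_zero, abs_of_nonneg hs.1]
    exact hs.2.trans_le (min_le_left _ _))
  have hxs : (x, s) ∈ g ⁻¹' Ioi 0 ∩ K ×ˢ Ico 0 R := hVeq ▸ ⟨huv ⟨hKu hx, hsv⟩, hx, hsR⟩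
  exact hxs.1

lemma forall_pos_and_forall_neg_and_eq_zero_iff {g : ℝ → ℝ} {a b : ℝ} (ha : a ≤ 0) (hb : 0 ≤ b)
    (hg : ∀ h ∈ Ioo a b, h ≠ 0 → 0 < h * g h) (hg0 : g 0 = 0) :
    (∀ h ∈ Ioo 0 b, 0 < g h) ∧ (∀ h ∈ Ioo a 0, g h < 0) ∧ ∀ h ∈ Ioo a b, (g h = 0 ↔ h = 0) := by
  refine ⟨fun h hh ↦ ?_, fun h hh ↦ ?_, fun h hh ↦ ⟨fun hgh ↦ ?_, fun h0 ↦ h0 ▸ hg0⟩⟩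
  · exact pos_of_mul_pos_right (hg h ⟨ha.trans_lt hh.1, hh.2⟩ hh.1.ne') hh.1.le
  · exact neg_of_mul_pos_right (hg h ⟨hh.1, hh.2.trans_le hb⟩ hh.2.ne) hh.2.le
  · by_contra hne
    simpa [hgh] using hg h hh hne

/-- abstract content of Lemma 6 (vertical case): `f` strictly
increasing with strong-force blowup `|f(h)|(L-1-|h|)^{3/2} → ∞`, and `ψ` a
perturbation of `f` with `|ψ - f| ≤ Cbar (L-1-|h|)^{-3/2}`; then for small
`𝓡 > 0`, `ψ(·,𝓡)` is positive on `(0,L-1)`, negative on `(-L+1,0)`, and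
vanishes only at `h = 0`. -/
theorem stmt7 (L R₀ : ℝ) (hL : 1 < L) (hR₀ : 0 < R₀)
    (f f' : ℝ → ℝ) (ψ : ℝ → ℝ → ℝ) (Cbar : ℝ) (hCbar : 0 < Cbar)
    (hf_diff : ∀ h ∈ Ioo (-L + 1) (L - 1), HasDerivAt f (f' h) h)
    (hf' : ∀ h ∈ Ioo (-L + 1) (L - 1), 0 < f' h)
    (hf_blow : ∀ M > 0, ∃ η > 0, ∀ h ∈ Ioo (-L + 1) (L - 1),
      L - 1 - |h| < η → |f h| * (L - 1 - |h|) ^ ((3 : ℝ) / 2) > M)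
    (hψ_cont : ContinuousOn (fun p : ℝ × ℝ => ψ p.1 p.2)
      (Ioo (-L + 1) (L - 1) ×ˢ Ico 0 R₀))
    (hψ_C1 : ContDiffAt ℝ 1 (fun p : ℝ × ℝ => ψ p.1 p.2) (0, 0))
    (hψ0 : ∀ 𝓡 ∈ Ico (0 : ℝ) R₀, ψ 0 𝓡 = 0)
    (hψf : ∀ h ∈ Ioo (-L + 1) (L - 1), ψ h 0 = f h)
    (hbound : ∀ h ∈ Ioo (-L + 1) (L - 1), ∀ 𝓡 ∈ Ico (0 : ℝ) R₀,
      |ψ h 𝓡 - f h| ≤ Cbar * (L - 1 - |h|) ^ (-(3 : ℝ) / 2)) :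
    ∃ 𝓡₁ > 0, ∀ 𝓡, 0 < 𝓡 → 𝓡 < 𝓡₁ → 𝓡 < R₀ →
      (∀ h ∈ Ioo (0 : ℝ) (L - 1), 0 < ψ h 𝓡) ∧
      (∀ h ∈ Ioo (-L + 1) (0 : ℝ), ψ h 𝓡 < 0) ∧
      (∀ h ∈ Ioo (-L + 1) (L - 1), (ψ h 𝓡 = 0 ↔ h = 0)) := by
  have hdom0 : (0 : ℝ) ∈ Ioo (-L + 1) (L - 1) := ⟨by linarith, by linarith⟩
  have hf_sign : ∀ h ∈ Ioo (-L + 1) (L - 1), h ≠ 0 → 0 < h * f h := fun _ ↦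
    mul_map_pos_of_hasDerivAt_pos hf_diff hf' hdom0 ((hψf 0 hdom0).symm.trans (hψ0 0 ⟨le_rfl, hR₀⟩))
  have hψ_deriv : HasDerivAt (fun h ↦ ψ h 0) (f' 0) 0 :=
    (hf_diff 0 hdom0).congr_of_eventuallyEq (eventually_of_mem (isOpen_Ioo.mem_nhds hdom0) hψf)
  obtain ⟨δ, hδ, hnear⟩ := exists_mul_pos_near_zero hψ_C1 hψ_deriv (hf' 0 hdom0) hψ0
  obtain ⟨η, hη, hblow⟩ := hf_blow Cbar hCbar
  set K := Icc (-(L - 1 - η)) (L - 1 - η) \ Ioo (-δ) δ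
  have hK : K ⊆ Ioo (-L + 1) (L - 1) := fun h hh ↦ ⟨by linarith [hh.1.1], by linarith [hh.1.2]⟩
  have hK0 : ∀ h ∈ K, h ≠ 0 := fun h hh h0 ↦ hh.2 (h0 ▸ ⟨neg_lt_zero.2 hδ, hδ⟩)
  obtain ⟨r, hr, hmid⟩ := (isCompact_Icc.diff isOpen_Ioo).exists_forall_pos_of_continuousOn
    (g := fun p ↦ p.1 * ψ p.1 p.2) hR₀ ((continuousOn_fst.mul hψ_cont).mono (prod_mono hK le_rfl))
    (fun h hh ↦ (hψf h (hK hh)).symm ▸ hf_sign h (hK hh) (hK0 h hh))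
  refine ⟨min δ r, lt_min hδ hr, fun 𝓡 h𝓡 h𝓡₁ h𝓡₀ ↦ ?_⟩
  have h𝓡I : 𝓡 ∈ Ico 0 R₀ := ⟨h𝓡.le, h𝓡₀⟩
  refine forall_pos_and_forall_neg_and_eq_zero_iff (by linarith) (by linarith)
    (fun h hh hne ↦ ?_) (hψ0 𝓡 h𝓡I)
  by_cases hsmall : |h| < δ
  · exact hnear 𝓡 h𝓡I (h𝓡₁.trans_le (min_le_left _ _)) h hsmall hne
  by_cases hlarge : L - 1 - |h| < η
  · exact mul_pos_of_abs_sub_le_mul_rpow_neg (sub_pos.2 (abs_lt.2 ⟨by linarith [hh.1], hh.2⟩))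
      (hf_sign h hh hne)
      (hblow h hh hlarge) (by simpa only [neg_div] using hbound h hh 𝓡 h𝓡I)
  · exact hmid h ⟨abs_le.1 (by linarith), fun hlt ↦ hsmall (abs_lt.2 hlt)⟩ 𝓡
      ⟨h𝓡.le, h𝓡₁.trans_le (min_le_right _ _)⟩
end
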